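/- The family of behaviors of deterministic splitters is not closed under union: over the alphabet A = {a,b} (a ≠ b), each of the singleton sets {(a, b, ab)} and {(a, b, ba)} is the behavior of a deterministic splitter with finitely many states, but their union {(a,b,ab), (a,b,ba)} is not the behavior of any deterministic splitter. -/

import Mathlib

/-!
A chain of states spelling a product of generators is a deterministic splitter realizing exactly
that product, which gives the two singletons. Conversely, every run of a deterministic splitter
starts at its unique initial state, whose transitions all write to the same tape, so the first
output letter of every accepted triple is the first letter of that one tape. For `(a, b, ab)` this
tape must be the first, for `(a, b, ba)` the second.
-/

/-- Words over the alphabet `A`, i.e. elements of the free monoid `A*`. -/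
abbrev Word (A : Type) := List A

/-- The generating set `G = {(a,ε,a) : a ∈ A} ∪ {(ε,a,a) : a ∈ A}` of the
Shuffling Monoid. -/
def genG (A : Type) : Set (Word A × Word A × Word A) :=
  {g | ∃ a : A, g = ([a], [], [a]) ∨ g = ([], [a], [a])}

/-- Componentwise product (concatenation) of a list of triples of words. -/
def prodTriple {A : Type} (ls : List (Word A × Word A × Word A)) :
    Word A × Word A × Word A :=
  ((ls.map fun l => l.1).flatten, (ls.map fun l => l.2.1).flatten,
    (ls.map fun l => l.2.2).flatten)

/-- The Shuffling Monoid `U`: the submonoid of `A* × A* × A*` generated by `G`,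
described as the set of all products of finite sequences of generators. -/
def shuffleU (A : Type) : Set (Word A × Word A × Word A) :=
  {m | ∃ ls : List (Word A × Word A × Word A), (∀ l ∈ ls, l ∈ genG A) ∧ prodTriple ls = m}

/-- A spliffer (equivalently, splitter) over `A`: a finite automaton whose
transitions are labeled by elements of `G`. -/
structure Spliffer (A : Type) where
  Q : Type
  finQ : Finite Q
  E : Q → (Word A × Word A × Word A) → Q → Prop
  I : Set Q
  T : Set Q
  labels_mem : ∀ {q l q'}, E q l q' → l ∈ genG A

/-- Paths in a spliffer, recording the sequence of labels. -/
inductive Spliffer.Path {A : Type} (S : Spliffer A) :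
    S.Q → List (Word A × Word A × Word A) → S.Q → Prop
  | nil (q : S.Q) : Spliffer.Path S q [] q
  | cons {q q' q'' : S.Q} {l : Word A × Word A × Word A}
      {ls : List (Word A × Word A × Word A)} :
      S.E q l q' → Spliffer.Path S q' ls q'' → Spliffer.Path S q (l :: ls) q''

/-- The behavior `|S|` of a spliffer: products of the label sequences of all
successful runs. -/
def Spliffer.behavior {A : Type} (S : Spliffer A) : Set (Word A × Word A × Word A) :=
  {m | ∃ q ∈ S.I, ∃ q' ∈ S.T, ∃ ls, S.Path q ls q' ∧ prodTriple ls = m}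

/-- A splitter is deterministic if it has a single initial state, for every state
and input letter there is at most one outgoing transition reading that letter,
and all transitions leaving a given state write to the same tape. -/
def Spliffer.Deterministic {A : Type} (S : Spliffer A) : Prop :=
  (∃! i, i ∈ S.I) ∧
  (∀ ⦃q l₁ q₁ l₂ q₂⦄, S.E q l₁ q₁ → S.E q l₂ q₂ → l₁.2.2 = l₂.2.2 → l₁ = l₂ ∧ q₁ = q₂) ∧
  (∀ ⦃q l₁ q₁ l₂ q₂⦄, S.E q l₁ q₁ → S.E q l₂ q₂ →
    (l₁.1 = [] ∧ l₂.1 = []) ∨ (l₁.2.1 = [] ∧ l₂.2.1 = []))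

section

variable {A : Type}

lemma fst_eq_nil_or_snd_eq_nil_of_mem_genG {l : Word A × Word A × Word A} (h : l ∈ genG A) :
    l.1 = [] ∨ l.2.1 = [] := by
  obtain ⟨x, rfl | rfl⟩ := h <;> simp

lemma prodTriple_cons (l : Word A × Word A × Word A) (ls : List (Word A × Word A × Word A)) :
    prodTriple (l :: ls) =
      (l.1 ++ (prodTriple ls).1, l.2.1 ++ (prodTriple ls).2.1, l.2.2 ++ (prodTriple ls).2.2) := by
  simp [prodTriple]

lemma head?_fst_prodTriple_cons {l : Word A × Word A × Word A} (hl : l ∈ genG A)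
    (h : l.2.1 = []) (ls : List (Word A × Word A × Word A)) :
    (prodTriple (l :: ls)).1.head? = (prodTriple (l :: ls)).2.2.head? := by
  obtain ⟨x, rfl | rfl⟩ := hl <;> simp_all [prodTriple_cons]

lemma head?_snd_prodTriple_cons {l : Word A × Word A × Word A} (hl : l ∈ genG A)
    (h : l.1 = []) (ls : List (Word A × Word A × Word A)) :
    (prodTriple (l :: ls)).2.1.head? = (prodTriple (l :: ls)).2.2.head? := by
  obtain ⟨x, rfl | rfl⟩ := hl <;> simp_all [prodTriple_cons]

namespace Spliffer

@[reducible]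
def ofList (ls : List (Word A × Word A × Word A)) (h : ∀ l ∈ ls, l ∈ genG A) :
    Spliffer A where
  Q := Fin (ls.length + 1)
  finQ := inferInstance
  E q l q' := q'.val = q.val + 1 ∧ ls[q.val]? = some l
  I := {0}
  T := {Fin.last _}
  labels_mem := fun he => h _ (List.mem_of_getElem? he.2)

variable {ls : List (Word A × Word A × Word A)} {h : ∀ l ∈ ls, l ∈ genG A}

lemma ofList_deterministic : (ofList ls h).Deterministic := by
  refine ⟨⟨0, rfl, fun _ hi => hi⟩, ?_, ?_⟩
  · rintro q l₁ q₁ l₂ q₂ ⟨hq₁, hl₁⟩ ⟨hq₂, hl₂⟩ -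
    exact ⟨Option.some_injective _ (hl₁.symm.trans hl₂), Fin.ext (hq₁.trans hq₂.symm)⟩
  · rintro q l₁ q₁ l₂ q₂ ⟨-, hl₁⟩ ⟨-, hl₂⟩
    obtain rfl : l₁ = l₂ := Option.some_injective _ (hl₁.symm.trans hl₂)
    rcases fst_eq_nil_or_snd_eq_nil_of_mem_genG (h l₁ (List.mem_of_getElem? hl₁)) with h' | h'
    · exact Or.inl ⟨h', h'⟩
    · exact Or.inr ⟨h', h'⟩

lemma ofList_path_spec {q q' : (ofList ls h).Q} {ls' : List (Word A × Word A × Word A)}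
    (hp : (ofList ls h).Path q ls' q') :
    q'.val = q.val + ls'.length ∧ ls' <+: ls.drop q.val := by
  induction hp with
  | nil q => simp
  | cons he _ ih =>
    obtain ⟨hq₁, hl⟩ := he
    obtain ⟨hk, hget⟩ := List.getElem?_eq_some_iff.mp hl
    refine ⟨by simp [ih.1, hq₁]; omega, ?_⟩
    rw [List.drop_eq_getElem_cons hk, hget]
    exact List.cons_prefix_cons.mpr ⟨rfl, hq₁ ▸ ih.2⟩

lemma ofList_path_drop (j : ℕ) (q : (ofList ls h).Q) (hj : q.val + j = ls.length) :
    (ofList ls h).Path q (ls.drop q.val) (Fin.last _) := by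
  induction j generalizing q with
  | zero =>
    obtain rfl : q = Fin.last _ := Fin.ext (by simpa using hj)
    simpa using Path.nil _
  | succ j ih =>
    have hq : q.val < ls.length := by omega
    rw [List.drop_eq_getElem_cons hq]
    refine .cons ?_ (ih ⟨q.val + 1, by omega⟩ (by simp only; omega))
    exact ⟨rfl, List.getElem?_eq_getElem hq⟩

lemma ofList_behavior : (ofList ls h).behavior = {prodTriple ls} := by
  ext m
  constructor
  · rintro ⟨q, hq, q', hq', ls', hp, rfl⟩
    obtain rfl : q = 0 := hq
    obtain rfl : q' = Fin.last _ := hq'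
    obtain ⟨hlen, hpre⟩ := ofList_path_spec hp
    simp only [Fin.val_last, Fin.val_zero, zero_add, List.drop_zero] at hlen hpre
    rw [hpre.eq_of_length hlen.symm]
    rfl
  · rintro rfl
    exact ⟨0, rfl, _, rfl, ls, by simpa using ofList_path_drop ls.length 0 (by simp), rfl⟩

theorem exists_deterministic_behavior_eq_singleton {m : Word A × Word A × Word A}
    (hm : m ∈ shuffleU A) : ∃ S : Spliffer A, S.Deterministic ∧ S.behavior = {m} := by
  obtain ⟨ls, h, rfl⟩ := hm
  exact ⟨ofList ls h, ofList_deterministic, ofList_behavior⟩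

/-- All runs leave the unique initial state, whose transitions write to a common tape. -/
theorem Deterministic.head?_eq_of_mem_behavior {S : Spliffer A} (hS : S.Deterministic)
    {m m' : Word A × Word A × Word A} (hm : m ∈ S.behavior) (hm' : m' ∈ S.behavior)
    (hne : m.2.2 ≠ []) (hne' : m'.2.2 ≠ []) :
    (m.1.head? = m.2.2.head? ∧ m'.1.head? = m'.2.2.head?) ∨
      (m.2.1.head? = m.2.2.head? ∧ m'.2.1.head? = m'.2.2.head?) := by
  obtain ⟨⟨i, -, hi⟩, -, hsame⟩ := hS
  obtain ⟨q, hq, _, _, ls, hp, rfl⟩ := hm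
  obtain ⟨q', hq', _, _, ls', hp', rfl⟩ := hm'
  obtain rfl := hi q hq
  obtain rfl := hi q' hq'
  cases hp with
  | nil => exact absurd rfl hne
  | cons he _ =>
    cases hp' with
    | nil => exact absurd rfl hne'
    | cons he' _ =>
      rcases hsame he he' with ⟨h, h'⟩ | ⟨h, h'⟩
      · exact Or.inr ⟨head?_snd_prodTriple_cons (S.labels_mem he) h _,
          head?_snd_prodTriple_cons (S.labels_mem he') h' _⟩
      · exact Or.inl ⟨head?_fst_prodTriple_cons (S.labels_mem he) h _,
          head?_fst_prodTriple_cons (S.labels_mem he') h' _⟩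

end Spliffer

end

theorem drat_not_closed_under_union_general {A : Type} (a b : A) (hab : a ≠ b) :
    (∃ S : Spliffer A, S.Deterministic ∧ S.behavior =
        ({([a], [b], [a, b])} : Set (Word A × Word A × Word A))) ∧
    (∃ S : Spliffer A, S.Deterministic ∧ S.behavior =
        ({([a], [b], [b, a])} : Set (Word A × Word A × Word A))) ∧
    ¬ ∃ S : Spliffer A, S.Deterministic ∧ S.behavior =
        ({([a], [b], [a, b]), ([a], [b], [b, a])} :
          Set (Word A × Word A × Word A)) := by
  have hxa : ([a], [], [a]) ∈ genG A := ⟨a, Or.inl rfl⟩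
  have hyb : ([], [b], [b]) ∈ genG A := ⟨b, Or.inr rfl⟩
  refine ⟨Spliffer.exists_deterministic_behavior_eq_singleton
      ⟨[([a], [], [a]), ([], [b], [b])], by simp [hxa, hyb], rfl⟩,
    Spliffer.exists_deterministic_behavior_eq_singleton
      ⟨[([], [b], [b]), ([a], [], [a])], by simp [hxa, hyb], rfl⟩, ?_⟩
  rintro ⟨S, hS, hbeh⟩
  have hfirst := hS.head?_eq_of_mem_behavior (m := ([a], [b], [a, b]))
    (m' := ([a], [b], [b, a])) (by simp [hbeh]) (by simp [hbeh]) (by simp) (by simp)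
  simp [hab, hab.symm] at hfirst

/-- over `A = {a,b}`, each of `{(a,b,ab)}` and `{(a,b,ba)}` is the
behavior of a deterministic splitter, but their union is not; hence behaviors
of deterministic splitters are not closed under union. -/
theorem drat_not_closed_under_union {A : Type} (a b : A) (hab : a ≠ b)
    (hA : ∀ x : A, x = a ∨ x = b) :
    (∃ S : Spliffer A, S.Deterministic ∧ S.behavior =
        ({([a], [b], [a, b])} : Set (Word A × Word A × Word A))) ∧
    (∃ S : Spliffer A, S.Deterministic ∧ S.behavior =
        ({([a], [b], [b, a])} : Set (Word A × Word A × Word A))) ∧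
    ¬ ∃ S : Spliffer A, S.Deterministic ∧ S.behavior =
        ({([a], [b], [a, b]), ([a], [b], [b, a])} :
          Set (Word A × Word A × Word A)) :=
  drat_not_closed_under_union_general a b hab
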